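/- Let D and F be nonempty HN data, let E be the semistable HN datum with single entry (rk(D) + rk(F), deg(D) + deg(F)), and let V be an HN datum such that: V strongly slopewise dominates D; V^∨ strongly slopewise dominates F^∨; HN(V) ≤ HN(D ⊕ F); and μ_max(D) < μ(E) < μ_min(F). Then δ(D, V) + δ(V, F) − δ(D, F) − δ(V, V) ≤ δ(D, F), with equality if and only if V = E. -/

import Mathlib

/-!
Write σ_X for the slope sequence of X, so that δ(X, Y) = ∑_{x ∈ σ_X, y ∈ σ_Y} (y - x)⁺, and put
A = σ_D, B = σ_F, C = σ_V. Then |C| = |A| + |B|, ∑ C = ∑ A + ∑ B = |C| μ with μ = μ(E), and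
every a ∈ A lies below μ while every b ∈ B lies above it. Since (y - x)⁺ - (x - y)⁺ = y - x, these
constraints turn δ(D, V) + δ(V, F) - 2 δ(D, F) - δ(V, V) into δ(C, A) + δ(B, C) - δ(C, C) in
slope-sequence form. With T = ∑_c (c - μ)⁺ = ∑_c (μ - c)⁺, the first two terms are at most |A| T and
|B| T, whereas the triangle inequality ∑_y |y - x| ≥ |∑_y (y - x)| = |C| |x - μ| gives
δ(C, C) ≥ |C| T. The bound on δ(B, C) is strict as soon as some c exceeds μ, which happens unless C
is constant; and C is constant exactly when V is semistable, i.e. V = E.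
-/

namespace HN

def slope (v : ℤ × ℤ) : ℚ := (v.2 : ℚ) / (v.1 : ℚ)

def cross (v w : ℤ × ℤ) : ℤ := v.1 * w.2 - v.2 * w.1

def IsHNDatum (E : List (ℤ × ℤ)) : Prop :=
  (∀ v ∈ E, 1 ≤ v.1) ∧ E.Pairwise (fun v w => slope w < slope v)

def rk (E : List (ℤ × ℤ)) : ℤ := (E.map Prod.fst).sum

def deg (E : List (ℤ × ℤ)) : ℤ := (E.map Prod.snd).sum

def delta (E F : List (ℤ × ℤ)) : ℤ :=
  (E.map fun e => ((F.filter fun f => decide (slope e ≤ slope f)).map fun f => cross e f).sum).sum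

def geSlope (E : List (ℤ × ℤ)) (μ : ℚ) : List (ℤ × ℤ) := E.filter fun v => decide (μ ≤ slope v)
def gtSlope (E : List (ℤ × ℤ)) (μ : ℚ) : List (ℤ × ℤ) := E.filter fun v => decide (μ < slope v)
def ltSlope (E : List (ℤ × ℤ)) (μ : ℚ) : List (ℤ × ℤ) := E.filter fun v => decide (slope v < μ)

def sigmaList (E : List (ℤ × ℤ)) : List ℚ :=
  E.flatMap fun v => List.replicate v.1.toNat (slope v)

def sigmaSlope (E : List (ℤ × ℤ)) (i : ℕ) : ℚ := (sigmaList E).getD (i - 1) 0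

def poly (E : List (ℤ × ℤ)) (k : ℕ) : ℚ := ((sigmaList E).take k).sum

def polySum (A B : List (ℤ × ℤ)) (k : ℕ) : ℚ :=
  (((sigmaList A ++ sigmaList B).mergeSort fun a b => decide (b ≤ a)).take k).sum

def SlopewiseDom (E F : List (ℤ × ℤ)) : Prop :=
  ∀ μ : ℚ, rk (geSlope F μ) ≤ rk (geSlope E μ)

def StrongSlopewiseDom (E F : List (ℤ × ℤ)) : Prop :=
  SlopewiseDom E F ∧ ∀ μ : ℚ, rk (geSlope E μ) = rk (geSlope F μ) → geSlope E μ = geSlope F μ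

def dual (E : List (ℤ × ℤ)) : List (ℤ × ℤ) := (E.map fun v => (v.1, -v.2)).reverse

def HNleSum (E A B : List (ℤ × ℤ)) : Prop :=
  rk E = rk A + rk B ∧ deg E = deg A + deg B ∧
    ∀ k : ℕ, (k : ℤ) ≤ rk E → poly E k ≤ polySum A B k

def HasVertex (V : List (ℤ × ℤ)) (j : ℕ) : Prop :=
  (j : ℤ) = rk V ∨ sigmaSlope V (j + 1) < sigmaSlope V j

section GapSum

open Multiset

variable {K : Type*} [CommRing K] [LinearOrder K]

def gapSum (X Y : Multiset K) : K := (X.map fun x => (Y.map fun y => (y - x)⁺).sum).sum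

lemma gapSum_swap (X Y : Multiset K) :
    gapSum Y X = (X.map fun x => (Y.map fun y => (x - y)⁺).sum).sum :=
  sum_map_sum_map _ _

variable [IsStrictOrderedRing K]

lemma gapSum_eq_zero_of_le {X Y : Multiset K} (h : ∀ x ∈ X, ∀ y ∈ Y, y ≤ x) :
    gapSum X Y = 0 :=
  sum_eq_zero fun _ hs => by
    obtain ⟨x, hx, rfl⟩ := mem_map.1 hs
    exact sum_eq_zero fun _ ht => by
      obtain ⟨y, hy, rfl⟩ := mem_map.1 ht
      exact posPart_eq_zero.2 (sub_nonpos.2 (h x hx y hy))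

lemma gapSum_sub_gapSum_swap (X Y : Multiset K) :
    gapSum X Y - gapSum Y X = card X * Y.sum - card Y * X.sum := by
  have hterm : ∀ x y : K, (y - x)⁺ - (x - y)⁺ = y - x := fun x y => by
    rw [← neg_sub y x, posPart_neg, posPart_sub_negPart]
  rw [gapSum, gapSum_swap, ← sum_map_sub]
  simp_rw [← sum_map_sub (f := fun y => (y - _)⁺), hterm]
  simp only [sum_map_sub, map_id', map_const', sum_replicate, nsmul_eq_mul]
  rw [sum_map_mul_left, map_id']

lemma two_mul_gapSum_self (C : Multiset K) :
    2 * gapSum C C = (C.map fun x => (C.map fun y => |y - x|).sum).sum := by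
  have hterm : ∀ x y : K, |y - x| = (y - x)⁺ + (x - y)⁺ := fun x y => by
    rw [← neg_sub y x, posPart_neg, posPart_add_negPart]
  rw [two_mul]
  nth_rw 2 [gapSum_swap]
  rw [gapSum, ← sum_map_add]
  simp_rw [← sum_map_add, ← hterm]

lemma card_mul_sum_abs_sub_le_two_mul_gapSum {C : Multiset K} {μ : K}
    (hμ : C.sum = card C * μ) :
    card C * (C.map fun x => |x - μ|).sum ≤ 2 * gapSum C C := by
  rw [two_mul_gapSum_self, ← sum_map_mul_left]
  refine sum_map_le_sum_map _ _ fun x _ => ?_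
  calc (card C : K) * |x - μ| = |(C.map fun y => y - x).sum| := by
        rw [sum_map_sub, map_id', hμ, map_const', sum_replicate, nsmul_eq_mul, ← mul_sub,
          abs_mul, Nat.abs_cast, abs_sub_comm]
    _ ≤ (C.map fun y => |y - x|).sum := by
        simpa only [map_map, Function.comp_def] using abs_sum_le_sum_abs (s := C.map (· - x))

lemma sum_posPart_sub_eq {C : Multiset K} {μ : K} (hμ : C.sum = card C * μ) :
    (C.map fun c => (μ - c)⁺).sum = (C.map fun c => (c - μ)⁺).sum := by
  have hterm : ∀ c : K, (c - μ)⁺ - (μ - c)⁺ = c - μ := fun c => by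
    rw [← neg_sub c μ, posPart_neg, posPart_sub_negPart]
  have hdiff : (C.map fun c => (c - μ)⁺).sum - (C.map fun c => (μ - c)⁺).sum = 0 := by
    rw [← sum_map_sub]
    simp only [hterm, sum_map_sub, map_id', hμ, map_const', sum_replicate, nsmul_eq_mul, sub_self]
  linarith

lemma card_mul_le_gapSum_self {C : Multiset K} {μ : K} (hμ : C.sum = card C * μ) :
    card C * (C.map fun c => (c - μ)⁺).sum ≤ gapSum C C := by
  have habs : (C.map fun x => |x - μ|).sum = 2 * (C.map fun c => (c - μ)⁺).sum := by
    have hterm : ∀ c : K, |c - μ| = (c - μ)⁺ + (μ - c)⁺ := fun c => by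
      rw [← neg_sub c μ, posPart_neg, posPart_add_negPart]
    simp only [hterm, sum_map_add, sum_posPart_sub_eq hμ]
    ring
  have := card_mul_sum_abs_sub_le_two_mul_gapSum hμ
  rw [habs] at this
  linarith

lemma gapSum_le_card_mul_left {A C : Multiset K} {μ : K} (h : ∀ a ∈ A, a ≤ μ) :
    gapSum C A ≤ card A * (C.map fun c => (μ - c)⁺).sum := by
  rw [gapSum_swap, ← nsmul_eq_mul, ← card_map (fun a => (C.map fun c => (a - c)⁺).sum)]
  refine sum_le_card_nsmul _ _ fun _ hs => ?_
  obtain ⟨a, ha, rfl⟩ := mem_map.1 hs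
  exact sum_map_le_sum_map _ _ fun c _ => posPart_mono (sub_le_sub_right (h a ha) c)

lemma gapSum_le_card_mul_right {B C : Multiset K} {μ : K} (h : ∀ b ∈ B, μ ≤ b) :
    gapSum B C ≤ card B * (C.map fun c => (c - μ)⁺).sum := by
  rw [gapSum, ← nsmul_eq_mul, ← card_map (fun b => (C.map fun c => (c - b)⁺).sum)]
  refine sum_le_card_nsmul _ _ fun _ hs => ?_
  obtain ⟨b, hb, rfl⟩ := mem_map.1 hs
  exact sum_map_le_sum_map _ _ fun c _ => posPart_mono (sub_le_sub_left (h b hb) c)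

lemma gapSum_lt_card_mul_right {B C : Multiset K} {μ : K} (hB0 : B ≠ 0)
    (h : ∀ b ∈ B, μ < b) (hC : ∃ c ∈ C, μ < c) :
    gapSum B C < card B * (C.map fun c => (c - μ)⁺).sum := by
  obtain ⟨c₀, hc₀, hμc₀⟩ := hC
  have hterm : ∀ b ∈ B, (C.map fun c => (c - b)⁺).sum < (C.map fun c => (c - μ)⁺).sum :=
    fun b hb => sum_lt_sum (fun c _ => posPart_mono (sub_le_sub_left (h b hb).le c))
      ⟨c₀, hc₀, by
        rw [posPart_eq_self.2 (sub_nonneg.2 hμc₀.le)]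
        exact max_lt (sub_lt_sub_left (h b hb) c₀) (sub_pos.2 hμc₀)⟩
  calc gapSum B C < (B.map fun _ => (C.map fun c => (c - μ)⁺).sum).sum :=
        sum_lt_sum_of_nonempty hB0 hterm
    _ = _ := by rw [map_const', sum_replicate, nsmul_eq_mul]

lemma exists_gt_of_sum_eq_card_mul {C : Multiset K} {μ : K} (hμ : C.sum = card C * μ)
    (hne : ∃ c ∈ C, c ≠ μ) : ∃ c ∈ C, μ < c := by
  by_contra! hle
  obtain ⟨c₀, hc₀, hc₀μ⟩ := hne
  have hlt : (C.map fun c => c - μ).sum < (C.map fun _ => (0 : K)).sum :=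
    sum_lt_sum (fun c hc => sub_nonpos.2 (hle c hc))
      ⟨c₀, hc₀, sub_neg.2 (lt_of_le_of_ne (hle c₀ hc₀) hc₀μ)⟩
  simp [sum_map_sub, hμ] at hlt

lemma gapSum_add_gapSum_sub_eq {A B C : Multiset K} (hcard : card C = card A + card B)
    (hsum : C.sum = A.sum + B.sum) :
    gapSum A C + gapSum C B - 2 * gapSum A B - gapSum C C
      = gapSum C A + gapSum B C - gapSum C C - 2 * gapSum B A := by
  have hAC := gapSum_sub_gapSum_swap A C
  have hCB := gapSum_sub_gapSum_swap C B
  have hAB := gapSum_sub_gapSum_swap A B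
  rw [hcard, hsum, Nat.cast_add] at hAC hCB
  linear_combination hAC + hCB - 2 * hAB

theorem gapSum_add_gapSum_sub_le_and_eq_iff {A B C : Multiset K} {μ : K} (hA : ∀ a ∈ A, a < μ)
    (hB : ∀ b ∈ B, μ < b) (hB0 : B ≠ 0) (hcard : card C = card A + card B)
    (hsum : C.sum = A.sum + B.sum) (hμ : C.sum = card C * μ) :
    gapSum A C + gapSum C B - gapSum A B - gapSum C C ≤ gapSum A B ∧
      (gapSum A C + gapSum C B - gapSum A B - gapSum C C = gapSum A B ↔ ∀ c ∈ C, c = μ) := by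
  have hBA : gapSum B A = 0 :=
    gapSum_eq_zero_of_le fun b hb a ha => ((hA a ha).trans (hB b hb)).le
  have hswap := gapSum_add_gapSum_sub_eq hcard hsum
  have hCA := gapSum_le_card_mul_left (C := C) fun a ha => (hA a ha).le
  rw [sum_posPart_sub_eq hμ] at hCA
  have hBC := gapSum_le_card_mul_right (C := C) fun b hb => (hB b hb).le
  have hCC := card_mul_le_gapSum_self hμ
  rw [hcard, Nat.cast_add] at hCC
  refine ⟨by linarith, fun heq => ?_, fun hconst => ?_⟩
  · by_contra! hne
    have := gapSum_lt_card_mul_right hB0 hB (exists_gt_of_sum_eq_card_mul hμ hne)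
    linarith
  · have hCA0 : gapSum C A = 0 := gapSum_eq_zero_of_le fun c hc a ha => hconst c hc ▸ (hA a ha).le
    have hBC0 : gapSum B C = 0 := gapSum_eq_zero_of_le fun b hb c hc => hconst c hc ▸ (hB b hb).le
    have hCC0 : gapSum C C = 0 := gapSum_eq_zero_of_le fun c hc c' hc' => by
      rw [hconst c hc, hconst c' hc']
    linarith

end GapSum

lemma rk_pos {X : List (ℤ × ℤ)} (hX : ∀ v ∈ X, 1 ≤ v.1) (hne : X ≠ []) : 0 < rk X :=
  List.sum_pos _ (List.forall_mem_map.2 fun v hv => hX v hv) (by simpa using hne)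

lemma forall_mem_sigmaList {X : List (ℤ × ℤ)} (hX : ∀ v ∈ X, 1 ≤ v.1) {p : ℚ → Prop} :
    (∀ x ∈ sigmaList X, p x) ↔ ∀ v ∈ X, p (slope v) := by
  simp only [sigmaList, List.mem_flatMap, List.mem_replicate]
  refine ⟨fun h v hv => h _ ⟨v, hv, by have := hX v hv; omega, rfl⟩, ?_⟩
  rintro h _ ⟨v, hv, -, rfl⟩
  exact h v hv

lemma length_sigmaList {X : List (ℤ × ℤ)} (hX : ∀ v ∈ X, 1 ≤ v.1) :
    ((sigmaList X).length : ℤ) = rk X := by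
  induction X with
  | nil => rfl
  | cons v X ih =>
    have hv := hX v List.mem_cons_self
    simp only [sigmaList, rk, List.flatMap_cons, List.length_append, List.length_replicate,
      List.map_cons, List.sum_cons] at ih ⊢
    rw [Nat.cast_add, ih fun w hw => hX w (List.mem_cons_of_mem _ hw), Int.toNat_of_nonneg (by omega)]

lemma sum_map_sigmaList {X : List (ℤ × ℤ)} (hX : ∀ v ∈ X, 1 ≤ v.1) (g : ℚ → ℚ) :
    ((sigmaList X).map g).sum = (X.map fun v => (v.1 : ℚ) * g (slope v)).sum := by
  induction X with
  | nil => rfl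
  | cons v X ih =>
    have hv := hX v List.mem_cons_self
    simp only [sigmaList, List.flatMap_cons, List.map_append, List.sum_append, List.map_replicate,
      List.sum_replicate, nsmul_eq_mul, List.map_cons, List.sum_cons] at ih ⊢
    rw [ih fun w hw => hX w (List.mem_cons_of_mem _ hw)]
    congr 2
    exact_mod_cast Int.toNat_of_nonneg (by omega)

lemma sum_sigmaList {X : List (ℤ × ℤ)} (hX : ∀ v ∈ X, 1 ≤ v.1) :
    (sigmaList X).sum = deg X := by
  have h := sum_map_sigmaList hX id
  rw [List.map_id] at h
  rw [h, deg, Int.cast_list_sum, List.map_map]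
  refine congrArg List.sum (List.map_congr_left fun v hv => ?_)
  have : (v.1 : ℚ) ≠ 0 := by have := hX v hv; positivity
  simp [slope, mul_div_cancel₀ _ this]

lemma cast_cross {e f : ℤ × ℤ} (he : 1 ≤ e.1) (hf : 1 ≤ f.1) :
    (cross e f : ℚ) = e.1 * f.1 * (slope f - slope e) := by
  have : (e.1 : ℚ) ≠ 0 := by positivity
  have : (f.1 : ℚ) ≠ 0 := by positivity
  simp only [cross, slope]
  push_cast
  field_simp

lemma delta_eq_gapSum {X Y : List (ℤ × ℤ)} (hX : ∀ v ∈ X, 1 ≤ v.1) (hY : ∀ v ∈ Y, 1 ≤ v.1) :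
    (delta X Y : ℚ) = gapSum (sigmaList X : Multiset ℚ) (sigmaList Y) := by
  simp only [gapSum, Multiset.map_coe, Multiset.sum_coe, sum_map_sigmaList hX,
    sum_map_sigmaList hY, delta, Int.cast_list_sum, List.map_map]
  refine congrArg List.sum (List.map_congr_left fun e he => ?_)
  simp only [Function.comp_apply, Int.cast_list_sum, List.map_map, ← List.sum_map_mul_left]
  have hterm : ∀ f ∈ Y, (e.1 : ℚ) * (f.1 * (slope f - slope e)⁺)
      = if slope e ≤ slope f then (cross e f : ℚ) else 0 := fun f hf => by
    split_ifs with h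
    · rw [cast_cross (hX e he) (hY f hf), posPart_eq_self.2 (sub_nonneg.2 h)]
      ring
    · rw [posPart_eq_zero.2 (sub_nonpos.2 (not_le.1 h).le), mul_zero, mul_zero]
  rw [List.map_congr_left hterm, List.sum_map_ite]
  simp [Function.comp_def]

lemma slope_le_slope_head {X : List (ℤ × ℤ)} (hX : X.Pairwise fun v w => slope w < slope v)
    (hne : X ≠ []) {v : ℤ × ℤ} (hv : v ∈ X) : slope v ≤ slope (X.head hne) := by
  cases X with
  | nil => contradiction
  | cons d X =>
    rcases List.mem_cons.1 hv with rfl | hv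
    exacts [le_rfl, (List.rel_of_pairwise_cons hX hv).le]

lemma slope_getLast_le_slope {X : List (ℤ × ℤ)} (hX : X.Pairwise fun v w => slope w < slope v)
    (hne : X ≠ []) {v : ℤ × ℤ} (hv : v ∈ X) : slope (X.getLast hne) ≤ slope v := by
  have hsplit := List.dropLast_append_getLast hne
  rw [← hsplit, List.pairwise_append] at hX
  rw [← hsplit, List.mem_append, List.mem_singleton] at hv
  rcases hv with hv | rfl
  exacts [(hX.2.2 v hv _ (List.mem_singleton_self _)).le, le_rfl]

lemma IsHNDatum.sigmaList_lt {X : List (ℤ × ℤ)} (hX : IsHNDatum X) (hne : X ≠ []) {μ : ℚ}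
    (h : slope (X.head hne) < μ) : ∀ x ∈ sigmaList X, x < μ :=
  (forall_mem_sigmaList hX.1).2 fun _ hv => (slope_le_slope_head hX.2 hne hv).trans_lt h

lemma IsHNDatum.lt_sigmaList {X : List (ℤ × ℤ)} (hX : IsHNDatum X) (hne : X ≠ []) {μ : ℚ}
    (h : μ < slope (X.getLast hne)) : ∀ x ∈ sigmaList X, μ < x :=
  (forall_mem_sigmaList hX.1).2 fun _ hv => h.trans_le (slope_getLast_le_slope hX.2 hne hv)

lemma sigmaList_ne_nil {X : List (ℤ × ℤ)} (hX : ∀ v ∈ X, 1 ≤ v.1) (hne : X ≠ []) :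
    sigmaList X ≠ [] := by
  have := length_sigmaList hX
  have := rk_pos hX hne
  rw [Ne, ← List.length_eq_zero_iff]
  omega

lemma sum_sigmaList_eq_length_mul {X : List (ℤ × ℤ)} (hX : ∀ v ∈ X, 1 ≤ v.1) (hne : X ≠ []) :
    (sigmaList X).sum = (sigmaList X).length * ((deg X : ℚ) / rk X) := by
  have hlen : ((sigmaList X).length : ℚ) = rk X := by exact_mod_cast length_sigmaList hX
  have hrk : (rk X : ℚ) ≠ 0 := by exact_mod_cast (rk_pos hX hne).ne'
  rw [sum_sigmaList hX, hlen, mul_div_cancel₀ _ hrk]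

lemma IsHNDatum.eq_singleton_iff {V : List (ℤ × ℤ)} (hV : IsHNDatum V) (hne : V ≠ []) :
    V = [(rk V, deg V)] ↔ ∀ x ∈ sigmaList V, x = (deg V : ℚ) / rk V := by
  rw [forall_mem_sigmaList hV.1]
  refine ⟨fun h v hv => ?_, fun h => ?_⟩
  · rw [h, List.mem_singleton] at hv
    rw [hv, slope]
  rcases V with _ | ⟨v, _ | ⟨w, V⟩⟩
  · contradiction
  · simp [rk, deg]
  · have hlt := List.rel_of_pairwise_cons hV.2 (List.mem_cons_self (a := w) (l := V))
    rw [h v List.mem_cons_self, h w (by simp)] at hlt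
    exact absurd hlt (lt_irrefl _)

theorem statement11_general (D F V E : List (ℤ × ℤ))
    (hD : IsHNDatum D) (hF : IsHNDatum F) (hV : IsHNDatum V)
    (hDne : D ≠ []) (hFne : F ≠ [])
    (hE : E = [(rk D + rk F, deg D + deg F)])
    (h3 : HNleSum V D F)
    (h4 : slope (D.head hDne) < ((deg D + deg F : ℤ) : ℚ) / ((rk D + rk F : ℤ) : ℚ))
    (h5 : ((deg D + deg F : ℤ) : ℚ) / ((rk D + rk F : ℤ) : ℚ) < slope (F.getLast hFne)) :
    delta D V + delta V F - delta D F - delta V V ≤ delta D F ∧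
      (delta D V + delta V F - delta D F - delta V V = delta D F ↔ V = E) := by
  obtain ⟨hrk, hdeg, -⟩ := h3
  have hVne : V ≠ [] := by
    rintro rfl
    exact absurd hrk (by rw [show rk [] = 0 from rfl]; linarith [rk_pos hD.1 hDne, rk_pos hF.1 hFne])
  rw [← hrk, ← hdeg] at h4 h5 hE
  subst hE
  have hcard : (sigmaList V).length = (sigmaList D).length + (sigmaList F).length := by
    have := length_sigmaList hV.1
    have := length_sigmaList hD.1
    have := length_sigmaList hF.1
    omega
  have hsum : (sigmaList V).sum = (sigmaList D).sum + (sigmaList F).sum := by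
    rw [sum_sigmaList hV.1, sum_sigmaList hD.1, sum_sigmaList hF.1, hdeg, Int.cast_add]
  obtain ⟨hle, hiff⟩ := gapSum_add_gapSum_sub_le_and_eq_iff (A := (sigmaList D : Multiset ℚ))
    (B := sigmaList F) (C := sigmaList V) (hD.sigmaList_lt hDne h4) (hF.lt_sigmaList hFne h5)
    (by simpa using sigmaList_ne_nil hF.1 hFne) hcard hsum (sum_sigmaList_eq_length_mul hV.1 hVne)
  simp only [← delta_eq_gapSum hD.1 hV.1, ← delta_eq_gapSum hV.1 hF.1,
    ← delta_eq_gapSum hD.1 hF.1, ← delta_eq_gapSum hV.1 hV.1, Multiset.mem_coe] at hle hiff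
  rw [hV.eq_singleton_iff hVne, ← hiff]
  exact ⟨by exact_mod_cast hle, by norm_cast⟩

/-- Key inequality for the proof of the main theorem when E is semistable. -/
theorem statement11 (D F V E : List (ℤ × ℤ))
    (hD : IsHNDatum D) (hF : IsHNDatum F) (hV : IsHNDatum V)
    (hDne : D ≠ []) (hFne : F ≠ [])
    (hE : E = [(rk D + rk F, deg D + deg F)])
    (h1 : StrongSlopewiseDom V D)
    (h2 : StrongSlopewiseDom (dual V) (dual F))
    (h3 : HNleSum V D F)
    (h4 : slope (D.head hDne) < ((deg D + deg F : ℤ) : ℚ) / ((rk D + rk F : ℤ) : ℚ))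
    (h5 : ((deg D + deg F : ℤ) : ℚ) / ((rk D + rk F : ℤ) : ℚ) < slope (F.getLast hFne)) :
    delta D V + delta V F - delta D F - delta V V ≤ delta D F ∧
      (delta D V + delta V F - delta D F - delta V V = delta D F ↔ V = E) :=
  statement11_general D F V E hD hF hV hDne hFne hE h3 h4 h5

end HN
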